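/- Let f, g : X → Y and f', g' : X' → Y' be fibrewise maps with α : Y → Y' and β : X' → X fibrewise homotopy equivalences such that α ∘ f ∘ β ≃_B f' and α ∘ g ∘ β ≃_B g'. Then D_B(f, g) = D_B(f', g'). -/
import Mathlib


open scoped unitInterval

variable {B X Y Z X' Y' : Type*} [TopologicalSpace B] [TopologicalSpace X]
  [TopologicalSpace Y] [TopologicalSpace Z] [TopologicalSpace X'] [TopologicalSpace Y']

/-- `f` and `g` are fibrewise homotopic over `B` on the subset `U ⊆ X`:
there is a homotopy `H` from `f|U` to `g|U` each of whose stages is fibrewise. -/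
def FibHomotopicOn (pX : X → B) (pY : Y → B) (f g : X → Y) (U : Set X) : Prop :=
  ∃ H : C(U × unitInterval, Y),
    (∀ u : U, H (u, 0) = f u) ∧ (∀ u : U, H (u, 1) = g u) ∧
    (∀ (u : U) (t : unitInterval), pY (H (u, t)) = pX u)

/-- The parametrized (fibrewise) homotopic distance `D_B(f,g)`: the least `n`
such that `X` has an open cover by `n+1` sets on each of which `f` and `g` are
fibrewise homotopic (`∞` if there is no such cover). -/
noncomputable def fibDist (pX : X → B) (pY : Y → B) (f g : X → Y) : ℕ∞ :=
  sInf ((fun n : ℕ => (n : ℕ∞)) ''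
    {n : ℕ | ∃ U : Fin (n + 1) → Set X,
      (∀ i, IsOpen (U i)) ∧ (⋃ i, U i) = Set.univ ∧
      ∀ i, FibHomotopicOn pX pY f g (U i)})

set_option linter.unusedSectionVars false

namespace FibHomotopicOn

variable {pX : X → B} {pY : Y → B} {pX' : X' → B} {pY' : Y' → B}
  {f g h : X → Y} {U V : Set X}

theorem symm (hH : FibHomotopicOn pX pY f g U) : FibHomotopicOn pX pY g f U := by
  obtain ⟨H, h0, h1, hp⟩ := hH
  refine ⟨⟨fun z => H (z.1, unitInterval.symm z.2), ?_⟩, fun u => ?_, fun u => ?_, fun u t => ?_⟩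
  · exact H.continuous.comp (by fun_prop)
  · simpa using h1 u
  · simpa using h0 u
  · exact hp u _

theorem comp (hH : FibHomotopicOn pX pY f g U) (m : X' → X) (hm : Continuous m)
    (hmp : ∀ x, pX (m x) = pX' x) {V : Set X'} (hV : ∀ x ∈ V, m x ∈ U) :
    FibHomotopicOn pX' pY (f ∘ m) (g ∘ m) V := by
  obtain ⟨H, h0, h1, hp⟩ := hH
  refine ⟨⟨fun z => H (⟨m z.1.1, hV _ z.1.2⟩, z.2), ?_⟩, fun u => ?_, fun u => ?_, fun u t => ?_⟩
  · exact H.continuous.comp (by fun_prop)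
  · exact h0 _
  · exact h1 _
  · exact (hp _ t).trans (hmp _)

theorem mono (hH : FibHomotopicOn pX pY f g U) (hVU : V ⊆ U) :
    FibHomotopicOn pX pY f g V :=
  hH.comp id continuous_id (fun _ => rfl) (fun _ hx => hVU hx)

theorem compLeft (hH : FibHomotopicOn pX pY f g U) {α : Y → Y'} (hα : Continuous α)
    (hαp : ∀ y, pY' (α y) = pY y) : FibHomotopicOn pX pY' (α ∘ f) (α ∘ g) U := by
  obtain ⟨H, h0, h1, hp⟩ := hH
  refine ⟨⟨fun z => α (H z), hα.comp H.continuous⟩, fun u => ?_, fun u => ?_, fun u t => ?_⟩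
  · simp [h0 u]
  · simp [h1 u]
  · exact (hαp _).trans (hp u t)

theorem trans (h1 : FibHomotopicOn pX pY f g U) (h2 : FibHomotopicOn pX pY g h U) :
    FibHomotopicOn pX pY f h U := by
  obtain ⟨H1, h10, h11, h1p⟩ := h1
  obtain ⟨H2, h20, h21, h2p⟩ := h2
  let fc : C(U, Y) := ⟨fun u => H1 (u, 0), H1.continuous.comp (by fun_prop)⟩
  let gc : C(U, Y) := ⟨fun u => H2 (u, 0), H2.continuous.comp (by fun_prop)⟩
  let hc : C(U, Y) := ⟨fun u => H2 (u, 1), H2.continuous.comp (by fun_prop)⟩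
  let F1 : ContinuousMap.Homotopy fc gc :=
    { toFun := fun z => H1 (z.2, z.1)
      continuous_toFun := H1.continuous.comp (by fun_prop)
      map_zero_left := fun u => rfl
      map_one_left := fun u => by show H1 (u, 1) = H2 (u, 0); rw [h11 u, h20 u] }
  let F2 : ContinuousMap.Homotopy gc hc :=
    { toFun := fun z => H2 (z.2, z.1)
      continuous_toFun := H2.continuous.comp (by fun_prop)
      map_zero_left := fun u => rfl
      map_one_left := fun u => rfl }
  have hF1 : ∀ (t : unitInterval) (u : U), pY (F1 (t, u)) = pX u := fun t u => h1p u t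
  have hF2 : ∀ (t : unitInterval) (u : U), pY (F2 (t, u)) = pX u := fun t u => h2p u t
  let F := F1.trans F2
  refine ⟨⟨fun z => F (z.2, z.1), F.continuous.comp (by fun_prop)⟩, fun u => ?_, fun u => ?_,
    fun u t => ?_⟩
  · show F (0, u) = f u
    rw [F.apply_zero]
    exact h10 u
  · show F (1, u) = h u
    rw [F.apply_one]
    exact h21 u
  · show pY (F (t, u)) = pX u
    rw [ContinuousMap.Homotopy.trans_apply]
    split <;> [exact hF1 _ u; exact hF2 _ u]

end FibHomotopicOn

theorem fibDist_le_aux (pX : X → B) (pY : Y → B) (pX' : X' → B) (pY' : Y' → B)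
    (f g : X → Y) (f' g' : X' → Y') (α : Y → Y') (β : X' → X)
    (hα : Continuous α) (hβ : Continuous β)
    (hαp : ∀ y, pY' (α y) = pY y) (hβp : ∀ x, pX (β x) = pX' x)
    (hcf : FibHomotopicOn pX' pY' (α ∘ f ∘ β) f' Set.univ)
    (hcg : FibHomotopicOn pX' pY' (α ∘ g ∘ β) g' Set.univ) :
    fibDist pX' pY' f' g' ≤ fibDist pX pY f g := by
  apply sInf_le_sInf
  rintro x ⟨n, ⟨U, hUo, hUc, hUH⟩, rfl⟩
  refine ⟨n, ⟨fun i => β ⁻¹' U i, fun i => (hUo i).preimage hβ, ?_, fun i => ?_⟩, rfl⟩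
  · ext x
    simp only [Set.mem_iUnion, Set.mem_preimage, Set.mem_univ, iff_true]
    have : β x ∈ ⋃ i, U i := by rw [hUc]; trivial
    exact Set.mem_iUnion.mp this
  · have h2 : FibHomotopicOn pX' pY' (α ∘ f ∘ β) (α ∘ g ∘ β) (β ⁻¹' U i) :=
      ((hUH i).comp β hβ hβp (fun x hx => hx)).compLeft hα hαp
    exact ((hcf.mono (Set.subset_univ _)).symm.trans h2).trans (hcg.mono (Set.subset_univ _))

theorem fibDist_invariance (pX : X → B) (pY : Y → B) (pX' : X' → B) (pY' : Y' → B)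
    (f g : X → Y) (f' g' : X' → Y') (α : Y → Y') (α' : Y' → Y) (β : X' → X) (β' : X → X')
    (hf : Continuous f) (hg : Continuous g) (hf' : Continuous f') (hg' : Continuous g')
    (hα : Continuous α) (hα' : Continuous α') (hβ : Continuous β) (hβ' : Continuous β')
    (hfp : ∀ x, pY (f x) = pX x) (hgp : ∀ x, pY (g x) = pX x)
    (hfp' : ∀ x, pY' (f' x) = pX' x) (hgp' : ∀ x, pY' (g' x) = pX' x)
    (hαp : ∀ y, pY' (α y) = pY y) (hα'p : ∀ y, pY (α' y) = pY' y)
    (hβp : ∀ x, pX (β x) = pX' x) (hβ'p : ∀ x, pX' (β' x) = pX x)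
    -- α is a fibrewise homotopy equivalence with homotopy inverse α'
    (hα1 : FibHomotopicOn pY pY (α' ∘ α) id Set.univ)
    (hα2 : FibHomotopicOn pY' pY' (α ∘ α') id Set.univ)
    -- β is a fibrewise homotopy equivalence with homotopy inverse β'
    (hβ1 : FibHomotopicOn pX' pX' (β' ∘ β) id Set.univ)
    (hβ2 : FibHomotopicOn pX pX (β ∘ β') id Set.univ)
    (hcomf : FibHomotopicOn pX' pY' (α ∘ f ∘ β) f' Set.univ)
    (hcomg : FibHomotopicOn pX' pY' (α ∘ g ∘ β) g' Set.univ) :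
    fibDist pX pY f g = fibDist pX' pY' f' g' := by
  have key : ∀ (h : X → Y) (h'' : X' → Y'), Continuous h → (∀ x, pY (h x) = pX x) →
      FibHomotopicOn pX' pY' (α ∘ h ∘ β) h'' Set.univ →
      FibHomotopicOn pX pY (α' ∘ h'' ∘ β') h Set.univ := by
    intro h h'' hc hhp hcom
    have stepA : FibHomotopicOn pX pY' ((α ∘ h ∘ β) ∘ β') (h'' ∘ β') Set.univ :=
      hcom.comp β' hβ' hβ'p (fun _ _ => trivial)
    have stepB : FibHomotopicOn pX pY (α' ∘ h'' ∘ β') (α' ∘ ((α ∘ h ∘ β) ∘ β')) Set.univ :=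
      (stepA.compLeft hα' hα'p).symm
    have stepC : FibHomotopicOn pX pY (α' ∘ ((α ∘ h ∘ β) ∘ β')) (h ∘ (β ∘ β')) Set.univ :=
      hα1.comp (h ∘ (β ∘ β')) (hc.comp (hβ.comp hβ'))
        (fun x => by simp only [Function.comp_apply, hhp, hβp, hβ'p]) (fun _ _ => trivial)
    have stepD : FibHomotopicOn pX pY (h ∘ (β ∘ β')) h Set.univ :=
      hβ2.compLeft hc hhp
    exact stepB.trans (stepC.trans stepD)
  refine le_antisymm ?_ (fibDist_le_aux pX pY pX' pY' f g f' g' α β hα hβ hαp hβp hcomf hcomg)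
  exact fibDist_le_aux pX' pY' pX pY f' g' f g α' β' hα' hβ' hα'p hβ'p
    (key f f' hf hfp hcomf) (key g g' hg hgp hcomg)
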